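/- arXiv:1802.10011 — 5 statements merged into one kernel-verified Lean document; each statement's English description precedes it below -/
import Mathlib

section
/- Let α, λ, h > 0 and L ≥ 0. The minimum of f(u) = α u³ + λ (L - u)³ / h over u ∈ [0, L] equals α L³ (1 + √(α h / λ))^{-2}. -/
/-!
Put `s = √(α / β)`, so that `α = β s²`. Convexity of `x ↦ x³` at the points `s u` and `L - u`
with weights `1 / (1 + s)` and `s / (1 + s)` gives `s² L³ ≤ (1 + s)² (s² u³ + (L - u)³)`, with
equality when `s u = L - u`, i.e. at the minimiser `u = L / (1 + s)`.
-/

open Set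

theorem sq_mul_cube_le_one_add_sq_mul {s u L : ℝ} (hs : 0 < s) (hu : u ∈ Icc 0 L) :
    s ^ 2 * L ^ 3 ≤ (1 + s) ^ 2 * (s ^ 2 * u ^ 3 + (L - u) ^ 3) := by
  obtain ⟨hu0, huL⟩ := hu
  have h1s : 0 < 1 + s := by linarith
  have jensen := (convexOn_pow 3).2 (mem_Ici.2 (mul_nonneg hs.le hu0))
    (mem_Ici.2 (sub_nonneg.2 huL)) (by positivity : 0 ≤ 1 / (1 + s))
    (by positivity : 0 ≤ s / (1 + s)) (by field_simp)
  simp only [smul_eq_mul] at jensen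
  have key : s * (s ^ 2 * L ^ 3) ≤ s * ((1 + s) ^ 2 * (s ^ 2 * u ^ 3 + (L - u) ^ 3)) :=
    calc s * (s ^ 2 * L ^ 3)
        = (1 + s) ^ 3 * (1 / (1 + s) * (s * u) + s / (1 + s) * (L - u)) ^ 3 := by
          field_simp; ring
      _ ≤ (1 + s) ^ 3 * (1 / (1 + s) * (s * u) ^ 3 + s / (1 + s) * (L - u) ^ 3) := by
          gcongr
      _ = s * ((1 + s) ^ 2 * (s ^ 2 * u ^ 3 + (L - u) ^ 3)) := by field_simp
  exact le_of_mul_le_mul_left key hs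

theorem isLeast_mul_cube_add_mul_sub_cube {α β L : ℝ} (hα : 0 < α) (hβ : 0 < β) (hL : 0 ≤ L) :
    IsLeast ((fun u : ℝ => α * u ^ 3 + β * (L - u) ^ 3) '' Icc 0 L)
      (α * L ^ 3 / (1 + √(α / β)) ^ 2) := by
  set s := √(α / β)
  have hs : 0 < s := Real.sqrt_pos.2 (by positivity)
  have hα_eq : α = β * s ^ 2 := by
    rw [Real.sq_sqrt (by positivity)]; field_simp
  have h1s : 0 < 1 + s := by linarith
  refine ⟨⟨L / (1 + s), ⟨by positivity, div_le_self hL (by linarith)⟩, ?_⟩, ?_⟩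
  · simp only [hα_eq]
    field_simp
    ring
  · rintro _ ⟨u, hu, rfl⟩
    rw [div_le_iff₀ (by positivity), hα_eq]
    have := mul_le_mul_of_nonneg_left (sq_mul_cube_le_one_add_sq_mul hs hu) hβ.le
    linarith

theorem stmt_2 (α lam h L : ℝ) (hα : 0 < α) (hlam : 0 < lam) (hh : 0 < h) (hL : 0 ≤ L) :
    IsLeast ((fun u : ℝ => α * u ^ 3 + lam * (L - u) ^ 3 / h) '' Set.Icc 0 L)
      (α * L ^ 3 / (1 + Real.sqrt (α * h / lam)) ^ 2) := by
  simpa only [div_div_eq_mul_div, div_mul_eq_mul_div] using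
    isLeast_mul_cube_add_mul_sub_cube hα (div_pos hlam hh) hL
end

section
/- Let α, λ, h > 0, S > 0, and L > 0. The minimum of g(u_lo, u_of) = α u_lo³ + λ u_of³ / h + α S (L - u_lo - u_of)³ over the simplex {u_lo ≥ 0, u_of ≥ 0, u_lo + u_of ≤ L} is attained at u_lo* = L (1 + 1/√S + √(α h / λ))^{-1} and u_of* = √(α h / λ) · u_lo*, and equals α L³ (1 + 1/√S + √(α h / λ))^{-2}. -/
/-!
All three terms are cubes `c t³` with positive weights, and the constraint fixes the sum of the three
arguments `u_lo`, `u_of`, `L - u_lo - u_of` to be `L`. A cube lies above its tangent line at any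
point `x ≥ 0`, so if the candidate point is chosen with the same marginal cost `c x² = μ` in every
term, the tangent lines add up to the constant `3μL - 2μL = μL`, which is the value at the candidate.
Equal marginal costs force the three arguments to be proportional to `1, √(αh/λ), 1/√S`.
-/

open Finset

theorem mul_sq_mul_sub_le_mul_pow_three {c t x : ℝ} (hc : 0 ≤ c) (ht : 0 ≤ t) (hx : 0 ≤ x) :
    c * x ^ 2 * (3 * t - 2 * x) ≤ c * t ^ 3 := by
  have : x ^ 2 * (3 * t - 2 * x) ≤ t ^ 3 := by
    nlinarith [mul_nonneg (sq_nonneg (t - x)) (by linarith : 0 ≤ t + 2 * x)]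
  simpa only [mul_assoc] using mul_le_mul_of_nonneg_left this hc

section WeightedCubes

variable {ι : Type*} (s : Finset ι) {c x : ι → ℝ} {μ : ℝ}

theorem sum_mul_pow_three_eq_of_mul_sq_eq (hμ : ∀ i ∈ s, c i * x i ^ 2 = μ) :
    ∑ i ∈ s, c i * x i ^ 3 = μ * ∑ i ∈ s, x i := by
  rw [mul_sum]
  refine sum_congr rfl fun i hi => ?_
  rw [← hμ i hi]
  ring

theorem sum_mul_pow_three_le_of_mul_sq_eq {t : ι → ℝ} (hc : ∀ i ∈ s, 0 ≤ c i)
    (hx : ∀ i ∈ s, 0 ≤ x i) (ht : ∀ i ∈ s, 0 ≤ t i) (hμ : ∀ i ∈ s, c i * x i ^ 2 = μ)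
    (hsum : ∑ i ∈ s, t i = ∑ i ∈ s, x i) :
    ∑ i ∈ s, c i * x i ^ 3 ≤ ∑ i ∈ s, c i * t i ^ 3 :=
  calc ∑ i ∈ s, c i * x i ^ 3 = ∑ i ∈ s, μ * (3 * t i - 2 * x i) := by
        rw [sum_mul_pow_three_eq_of_mul_sq_eq s hμ, ← mul_sum, sum_sub_distrib, ← mul_sum,
          ← mul_sum, hsum]
        ring
    _ ≤ ∑ i ∈ s, c i * t i ^ 3 := sum_le_sum fun i hi => by
        simpa only [hμ i hi] using mul_sq_mul_sub_le_mul_pow_three (hc i hi) (ht i hi) (hx i hi)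

end WeightedCubes

theorem offloading_marginal_costs_eq {α lam h S : ℝ} (hα : 0 ≤ α) (hlam : 0 < lam) (hh : 0 < h)
    (hS : 0 < S) (a : ℝ) (i : Fin 3) :
    ![α, lam / h, α * S] i * ![a, Real.sqrt (α * h / lam) * a, a / Real.sqrt S] i ^ 2
      = α * a ^ 2 := by
  fin_cases i
  · rfl
  · simp only [Fin.mk_one, Matrix.cons_val_one, Matrix.cons_val_zero]
    rw [mul_pow, Real.sq_sqrt (by positivity)]
    field_simp
  · simp only [Fin.reduceFinMk, Matrix.cons_val]
    rw [div_pow, Real.sq_sqrt hS.le]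
    field_simp

theorem stmt_5 (α lam h S L : ℝ) (hα : 0 < α) (hlam : 0 < lam) (hh : 0 < h) (hS : 0 < S)
    (hL : 0 < L) :
    IsMinOn (fun p : ℝ × ℝ => α * p.1 ^ 3 + lam * p.2 ^ 3 / h + α * S * (L - p.1 - p.2) ^ 3)
      {p : ℝ × ℝ | 0 ≤ p.1 ∧ 0 ≤ p.2 ∧ p.1 + p.2 ≤ L}
      (L / (1 + 1 / Real.sqrt S + Real.sqrt (α * h / lam)),
       Real.sqrt (α * h / lam) * (L / (1 + 1 / Real.sqrt S + Real.sqrt (α * h / lam)))) ∧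
    (fun p : ℝ × ℝ => α * p.1 ^ 3 + lam * p.2 ^ 3 / h + α * S * (L - p.1 - p.2) ^ 3)
      (L / (1 + 1 / Real.sqrt S + Real.sqrt (α * h / lam)),
       Real.sqrt (α * h / lam) * (L / (1 + 1 / Real.sqrt S + Real.sqrt (α * h / lam))))
      = α * L ^ 3 / (1 + 1 / Real.sqrt S + Real.sqrt (α * h / lam)) ^ 2 := by
  have hμ i (_ : i ∈ univ) := offloading_marginal_costs_eq hα.le hlam hh hS
    (L / (1 + 1 / Real.sqrt S + Real.sqrt (α * h / lam))) i
  set s := Real.sqrt S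
  set r := Real.sqrt (α * h / lam)
  have hs : 0 < s := Real.sqrt_pos.mpr hS
  have hr : 0 < r := Real.sqrt_pos.mpr (by positivity)
  set a := L / (1 + 1 / s + r) with ha_def
  have ha : 0 < a := by positivity
  have hsum : a + r * a + a / s = L := by
    rw [ha_def]; field_simp; ring
  have hthird : L - a - r * a = a / s := by linarith
  have hcand := sum_mul_pow_three_eq_of_mul_sq_eq univ hμ
  simp only [Fin.sum_univ_three, Matrix.cons_val_zero, Matrix.cons_val_one, Matrix.cons_val,
    hsum] at hcand
  refine ⟨isMinOn_iff.mpr fun p ⟨hp1, hp2, hp3⟩ => ?_, ?_⟩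
  · have key := sum_mul_pow_three_le_of_mul_sq_eq univ (t := ![p.1, p.2, L - p.1 - p.2])
      (by simpa [Fin.forall_fin_succ] using ⟨hα.le, by positivity, by positivity⟩)
      (by simpa [Fin.forall_fin_succ] using ⟨ha.le, by positivity, by positivity⟩)
      (by simpa [Fin.forall_fin_succ] using ⟨hp1, hp2, by linarith⟩) hμ
      (by simp only [Fin.sum_univ_three, Matrix.cons_val_zero, Matrix.cons_val_one,
        Matrix.cons_val, hsum]; ring)
    simp only [Fin.sum_univ_three, Matrix.cons_val_zero, Matrix.cons_val_one, Matrix.cons_val] at key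
    simpa only [div_mul_eq_mul_div, hthird] using key
  · dsimp only
    rw [hthird, ← div_mul_eq_mul_div, hcand, ha_def]
    field_simp
end

section
/- Let α, λ, g, b > 0 and transition probabilities as above. Define the sequence S_K = +∞ (interpreted as 1/√S_K = 0) and S_{k} = T(S_{k+1}) for k < K where T(S) = Σ_{c,h} p_c(c) p_h(h)(1 + 1/√S + c√(α h/λ))^{-2}. Then S_k is nondecreasing in the number of remaining slots K - k; equivalently, the optimal expected energy α D³ (1 + 1/√S_1 + x_C √(α x_H / λ))^{-2} is nonincreasing in K. -/
/-- Backward recursion of Theorem 1: `a n` is the factor `S` with `n + 1` remaining slots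
(`a 0` corresponds to `S_{K-1} = T(S_K)` with `1/√S_K = 0`).  A longer deadline never
increases the minimum expected user-energy consumption. -/
theorem stmt_9 (α lam g b pc0 pc1 phg phb D xC xH : ℝ)
    (hα : 0 < α) (hlam : 0 < lam) (hg : 0 < g) (hb : 0 < b)
    (hpc0 : 0 ≤ pc0) (hpc1 : 0 ≤ pc1) (hpcsum : pc0 + pc1 = 1)
    (hphg : 0 ≤ phg) (hphb : 0 ≤ phb) (hphsum : phg + phb = 1)
    (hD : 0 < D) (hxC : xC = 0 ∨ xC = 1) (hxH : xH = g ∨ xH = b)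
    (T : ℝ → ℝ)
    (hT : ∀ S : ℝ,
      T S = pc0 * phg * (1 / (1 + 1 / Real.sqrt S + 0 * Real.sqrt (α * g / lam)) ^ 2)
          + pc0 * phb * (1 / (1 + 1 / Real.sqrt S + 0 * Real.sqrt (α * b / lam)) ^ 2)
          + pc1 * phg * (1 / (1 + 1 / Real.sqrt S + 1 * Real.sqrt (α * g / lam)) ^ 2)
          + pc1 * phb * (1 / (1 + 1 / Real.sqrt S + 1 * Real.sqrt (α * b / lam)) ^ 2))
    (a : ℕ → ℝ)
    (ha0 : a 0 = pc0 * phg * (1 / (1 + 0 * Real.sqrt (α * g / lam)) ^ 2)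
          + pc0 * phb * (1 / (1 + 0 * Real.sqrt (α * b / lam)) ^ 2)
          + pc1 * phg * (1 / (1 + 1 * Real.sqrt (α * g / lam)) ^ 2)
          + pc1 * phb * (1 / (1 + 1 * Real.sqrt (α * b / lam)) ^ 2))
    (harec : ∀ n : ℕ, a (n + 1) = T (a n)) :
    ∀ n : ℕ,
      α * D ^ 3 / (1 + 1 / Real.sqrt (a (n + 1)) + xC * Real.sqrt (α * xH / lam)) ^ 2
        ≤ α * D ^ 3 / (1 + 1 / Real.sqrt (a n) + xC * Real.sqrt (α * xH / lam)) ^ 2 := by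
  set rg := Real.sqrt (α * g / lam) with hrgdef
  set rb := Real.sqrt (α * b / lam) with hrbdef
  have hrg : 0 ≤ rg := Real.sqrt_nonneg _
  have hrb : 0 ≤ rb := Real.sqrt_nonneg _
  set F : ℝ → ℝ := fun u =>
      pc0 * phg * (1 / (1 + u) ^ 2) + pc0 * phb * (1 / (1 + u) ^ 2)
    + pc1 * phg * (1 / (1 + u + rg) ^ 2) + pc1 * phb * (1 / (1 + u + rb) ^ 2) with hF
  have hTF : ∀ S, T S = F (1 / Real.sqrt S) := by
    intro S
    rw [hT, hF]
    ring_nf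
  have ha0F : a 0 = F 0 := by
    rw [ha0, hF]
    ring_nf
  have hw : pc0 * phg + pc0 * phb + pc1 * phg + pc1 * phb = 1 := by
    rw [show pc0 * phg + pc0 * phb + pc1 * phg + pc1 * phb
        = (pc0 + pc1) * (phg + phb) from by ring, hpcsum, hphsum]; ring
  have w1 := mul_nonneg hpc0 hphg
  have w2 := mul_nonneg hpc0 hphb
  have w3 := mul_nonneg hpc1 hphg
  have w4 := mul_nonneg hpc1 hphb
  -- F is positive for nonnegative arguments
  have Fpos : ∀ u : ℝ, 0 ≤ u → 0 < F u := by
    intro u hu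
    have h1 : (0:ℝ) < 1 + u := by linarith
    have hM : (0:ℝ) < 1 + u + rg + rb := by linarith
    have e1 : 1 / (1 + u + rg + rb) ^ 2 ≤ 1 / (1 + u) ^ 2 :=
      one_div_le_one_div_of_le (by positivity)
        (pow_le_pow_left₀ h1.le (by linarith) 2)
    have e3 : 1 / (1 + u + rg + rb) ^ 2 ≤ 1 / (1 + u + rg) ^ 2 :=
      one_div_le_one_div_of_le (by positivity)
        (pow_le_pow_left₀ (by linarith) (by linarith) 2)
    have e4 : 1 / (1 + u + rg + rb) ^ 2 ≤ 1 / (1 + u + rb) ^ 2 :=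
      one_div_le_one_div_of_le (by positivity)
        (pow_le_pow_left₀ (by linarith) (by linarith) 2)
    have hMpos : (0:ℝ) < 1 / (1 + u + rg + rb) ^ 2 := by positivity
    have hkey : (1:ℝ) / (1 + u + rg + rb) ^ 2 ≤ F u := by
      simp only [hF]
      calc (1:ℝ) / (1 + u + rg + rb) ^ 2
          = pc0 * phg * (1 / (1 + u + rg + rb) ^ 2)
            + pc0 * phb * (1 / (1 + u + rg + rb) ^ 2)
            + pc1 * phg * (1 / (1 + u + rg + rb) ^ 2)
            + pc1 * phb * (1 / (1 + u + rg + rb) ^ 2) := by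
              rw [show pc0 * phg * (1 / (1 + u + rg + rb) ^ 2)
                + pc0 * phb * (1 / (1 + u + rg + rb) ^ 2)
                + pc1 * phg * (1 / (1 + u + rg + rb) ^ 2)
                + pc1 * phb * (1 / (1 + u + rg + rb) ^ 2)
                = (pc0 * phg + pc0 * phb + pc1 * phg + pc1 * phb)
                  * (1 / (1 + u + rg + rb) ^ 2) from by ring, hw]; ring
        _ ≤ _ := add_le_add (add_le_add (add_le_add
            (mul_le_mul_of_nonneg_left e1 w1) (mul_le_mul_of_nonneg_left e1 w2))
            (mul_le_mul_of_nonneg_left e3 w3)) (mul_le_mul_of_nonneg_left e4 w4)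
    exact lt_of_lt_of_le hMpos hkey
  -- F is antitone on [0, ∞)
  have Fanti : ∀ u v : ℝ, 0 ≤ u → u ≤ v → F v ≤ F u := by
    intro u v hu huv
    have h1u : (0:ℝ) < 1 + u := by linarith
    have e1 : 1 / (1 + v) ^ 2 ≤ 1 / (1 + u) ^ 2 :=
      one_div_le_one_div_of_le (by positivity)
        (pow_le_pow_left₀ h1u.le (by linarith) 2)
    have e3 : 1 / (1 + v + rg) ^ 2 ≤ 1 / (1 + u + rg) ^ 2 :=
      one_div_le_one_div_of_le (by positivity)
        (pow_le_pow_left₀ (by linarith) (by linarith) 2)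
    have e4 : 1 / (1 + v + rb) ^ 2 ≤ 1 / (1 + u + rb) ^ 2 :=
      one_div_le_one_div_of_le (by positivity)
        (pow_le_pow_left₀ (by linarith) (by linarith) 2)
    simp only [hF]
    exact add_le_add (add_le_add (add_le_add
      (mul_le_mul_of_nonneg_left e1 w1) (mul_le_mul_of_nonneg_left e1 w2))
      (mul_le_mul_of_nonneg_left e3 w3)) (mul_le_mul_of_nonneg_left e4 w4)
  -- every a n is positive
  have apos : ∀ n : ℕ, 0 < a n := by
    intro n
    induction n with
    | zero => rw [ha0F]; exact Fpos 0 le_rfl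
    | succ k ih =>
        rw [harec, hTF]
        exact Fpos _ (by positivity)
  -- a is nonincreasing
  have amono : ∀ n : ℕ, a (n + 1) ≤ a n := by
    intro n
    induction n with
    | zero =>
        calc a 1 = F (1 / Real.sqrt (a 0)) := by rw [harec, hTF]
          _ ≤ F 0 := Fanti 0 _ le_rfl (by positivity)
          _ = a 0 := ha0F.symm
    | succ k ih =>
        have hk1 := apos (k + 1)
        have hk := apos k
        have hs : Real.sqrt (a (k + 1)) ≤ Real.sqrt (a k) := Real.sqrt_le_sqrt ih
        have hsp : 0 < Real.sqrt (a (k + 1)) := Real.sqrt_pos.mpr hk1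
        have hinv : 1 / Real.sqrt (a k) ≤ 1 / Real.sqrt (a (k + 1)) :=
          one_div_le_one_div_of_le hsp hs
        calc a (k + 2) = F (1 / Real.sqrt (a (k + 1))) := by rw [harec, hTF]
          _ ≤ F (1 / Real.sqrt (a k)) := Fanti _ _ (by positivity) hinv
          _ = a (k + 1) := by rw [harec, hTF]
  intro n
  have hc : 0 ≤ xC * Real.sqrt (α * xH / lam) := by
    rcases hxC with h | h <;> simp [h, Real.sqrt_nonneg]
  have hn := apos n
  have hn1 := apos (n + 1)
  have hs : Real.sqrt (a (n + 1)) ≤ Real.sqrt (a n) := Real.sqrt_le_sqrt (amono n)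
  have hsp : 0 < Real.sqrt (a (n + 1)) := Real.sqrt_pos.mpr hn1
  have hinv : 1 / Real.sqrt (a n) ≤ 1 / Real.sqrt (a (n + 1)) :=
    one_div_le_one_div_of_le hsp hs
  have hd : (0:ℝ) < 1 + 1 / Real.sqrt (a n) + xC * Real.sqrt (α * xH / lam) := by
    have : (0:ℝ) ≤ 1 / Real.sqrt (a n) := by positivity
    linarith
  gcongr
end

section
/- Let α, λ, h, S > 0, L > 0, q ≥ 0, and V ∈ [0, 1). The minimum of the function g(u_lo, u_of) = α u_lo³ + λ u_of³ / h + α S ((L - u_lo - u_of) + V (q + u_of))³ over {u_lo ≥ 0, u_of ≥ 0, u_lo + u_of ≤ L} (assuming the unconstrained stationary point is feasible) is attained at u_lo* = (L + V q) [1 + 1/√S + √(α/λ) (1 - V)^{3/2} √h]^{-1} and u_of* = √((α/λ) h (1 - V)) · u_lo*, with minimum value α (L + V q)³ [1 + 1/√S + √(α/λ)(1 - V)^{3/2} √h]^{-2}. -/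
/-!
After the substitution `K = L + V q`, `k = 1 - V` the cost is a positive combination of cubes
of the nonnegative affine quantities `x`, `y` and `K - x - k y`. On `z ≥ 0` the cube lies above
its tangent lines, `z³ ≥ z₀³ + 3 z₀² (z - z₀)`, so at a point where the three weighted tangent
slopes balance (the stationarity equations) the first-order terms cancel and the point is a global
minimiser over the nonnegative region, which contains the feasible set. With `β = √(α h (1 - V) / λ)`
and `D = 1 + 1/√S + (1 - V) β` the point `(K/D, β K/D)` is stationary, its residual
`K - x - k y` being `K/(D √S)`.
-/

def cubeCost (c₁ c₂ c₃ K k : ℝ) (p : ℝ × ℝ) : ℝ :=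
  c₁ * p.1 ^ 3 + c₂ * p.2 ^ 3 + c₃ * (K - p.1 - k * p.2) ^ 3

def cubeCostDomain (K k : ℝ) : Set (ℝ × ℝ) :=
  {p | 0 ≤ p.1 ∧ 0 ≤ p.2 ∧ 0 ≤ K - p.1 - k * p.2}

lemma cube_tangent_le {z z₀ : ℝ} (hz : 0 ≤ z) (hz₀ : 0 ≤ z₀) :
    z₀ ^ 3 + 3 * z₀ ^ 2 * (z - z₀) ≤ z ^ 3 := by
  nlinarith [mul_nonneg (sq_nonneg (z - z₀)) (by linarith : 0 ≤ z + 2 * z₀)]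

lemma isMinOn_cubeCost_of_stationary {c₁ c₂ c₃ K k u v : ℝ}
    (hc₁ : 0 ≤ c₁) (hc₂ : 0 ≤ c₂) (hc₃ : 0 ≤ c₃) (hu : 0 ≤ u) (hv : 0 ≤ v)
    (hr : 0 ≤ K - u - k * v)
    (hu_stat : c₁ * u ^ 2 = c₃ * (K - u - k * v) ^ 2)
    (hv_stat : c₂ * v ^ 2 = k * c₃ * (K - u - k * v) ^ 2) :
    IsMinOn (cubeCost c₁ c₂ c₃ K k) (cubeCostDomain K k) (u, v) := by
  rintro ⟨x, y⟩ ⟨hx, hy, hxy⟩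
  have tx := mul_le_mul_of_nonneg_left (cube_tangent_le hx hu) hc₁
  have ty := mul_le_mul_of_nonneg_left (cube_tangent_le hy hv) hc₂
  have tr := mul_le_mul_of_nonneg_left (cube_tangent_le hxy hr) hc₃
  show cubeCost c₁ c₂ c₃ K k (u, v) ≤ cubeCost c₁ c₂ c₃ K k (x, y)
  simp only [cubeCost] at *
  linear_combination tx + ty + tr - 3 * (x - u) * hu_stat - 3 * (y - v) * hv_stat

lemma isMinOn_cubeCost_closedForm {c₁ c₂ s K k β : ℝ} (hc₁ : 0 ≤ c₁) (hc₂ : 0 ≤ c₂) (hs : 0 < s)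
    (hK : 0 ≤ K) (hk : 0 ≤ k) (hβ : 0 ≤ β) (hβ_sq : c₂ * β ^ 2 = c₁ * k) :
    IsMinOn (cubeCost c₁ c₂ (c₁ * s ^ 2) K k) (cubeCostDomain K k)
        (K / (1 + 1 / s + k * β), β * (K / (1 + 1 / s + k * β))) ∧
      cubeCost c₁ c₂ (c₁ * s ^ 2) K k (K / (1 + 1 / s + k * β), β * (K / (1 + 1 / s + k * β)))
        = c₁ * K ^ 3 / (1 + 1 / s + k * β) ^ 2 := by
  set D := 1 + 1 / s + k * β with hD
  have hD_pos : 0 < D := by positivity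
  set u := K / D
  have hu : 0 ≤ u := by positivity
  have hK_eq : K = u * D := (div_mul_cancel₀ K hD_pos.ne').symm
  clear_value u D
  subst hK_eq hD
  have hr : u * (1 + 1 / s + k * β) - u - k * (β * u) = u / s := by ring
  refine ⟨isMinOn_cubeCost_of_stationary hc₁ hc₂ (by positivity) hu (by positivity)
    (by rw [hr]; positivity) ?_ ?_, ?_⟩
  · rw [hr]; field_simp
  · rw [hr]; field_simp; linear_combination u ^ 2 * hβ_sq
  · simp only [cubeCost]
    rw [hr]
    field_simp
    linear_combination (s * u ^ 3 * β) * hβ_sq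

theorem stmt_12_general (α lam h S L q V : ℝ) (hα : 0 < α) (hlam : 0 < lam) (hh : 0 < h)
    (hS : 0 < S) (hL : 0 < L) (hq : 0 ≤ q) (hV : V ∈ Set.Ico (0 : ℝ) 1) :
    IsMinOn
      (fun p : ℝ × ℝ =>
        α * p.1 ^ 3 + lam * p.2 ^ 3 / h + α * S * ((L - p.1 - p.2) + V * (q + p.2)) ^ 3)
      {p : ℝ × ℝ | 0 ≤ p.1 ∧ 0 ≤ p.2 ∧ p.1 + p.2 ≤ L}
      ((L + V * q) / (1 + 1 / Real.sqrt S + Real.sqrt (α / lam) * (1 - V) ^ ((3 : ℝ) / 2) * Real.sqrt h),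
       Real.sqrt (α / lam * h * (1 - V)) *
        ((L + V * q) / (1 + 1 / Real.sqrt S + Real.sqrt (α / lam) * (1 - V) ^ ((3 : ℝ) / 2) * Real.sqrt h))) ∧
    (fun p : ℝ × ℝ =>
        α * p.1 ^ 3 + lam * p.2 ^ 3 / h + α * S * ((L - p.1 - p.2) + V * (q + p.2)) ^ 3)
      ((L + V * q) / (1 + 1 / Real.sqrt S + Real.sqrt (α / lam) * (1 - V) ^ ((3 : ℝ) / 2) * Real.sqrt h),
       Real.sqrt (α / lam * h * (1 - V)) *
        ((L + V * q) / (1 + 1 / Real.sqrt S + Real.sqrt (α / lam) * (1 - V) ^ ((3 : ℝ) / 2) * Real.sqrt h)))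
      = α * (L + V * q) ^ 3
          / (1 + 1 / Real.sqrt S + Real.sqrt (α / lam) * (1 - V) ^ ((3 : ℝ) / 2) * Real.sqrt h) ^ 2 := by
  obtain ⟨hV₀, hV₁⟩ := hV
  have hk : 0 < 1 - V := by linarith
  have hcost : (fun p : ℝ × ℝ =>
      α * p.1 ^ 3 + lam * p.2 ^ 3 / h + α * S * ((L - p.1 - p.2) + V * (q + p.2)) ^ 3) =
      cubeCost α (lam / h) (α * Real.sqrt S ^ 2) (L + V * q) (1 - V) := by
    ext p
    rw [cubeCost, Real.sq_sqrt hS.le]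
    ring
  have hD : Real.sqrt (α / lam) * (1 - V) ^ ((3 : ℝ) / 2) * Real.sqrt h =
      (1 - V) * Real.sqrt (α / lam * h * (1 - V)) := by
    rw [show (3 : ℝ) / 2 = 1 + 1 / 2 by norm_num, Real.rpow_add hk, Real.rpow_one,
      ← Real.sqrt_eq_rpow, Real.sqrt_mul (by positivity), Real.sqrt_mul (by positivity)]
    ring
  have hβ_sq : lam / h * Real.sqrt (α / lam * h * (1 - V)) ^ 2 = α * (1 - V) := by
    rw [Real.sq_sqrt (by positivity)]
    field_simp
  have hdomain : {p : ℝ × ℝ | 0 ≤ p.1 ∧ 0 ≤ p.2 ∧ p.1 + p.2 ≤ L} ⊆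
      cubeCostDomain (L + V * q) (1 - V) := by
    rintro ⟨x, y⟩ ⟨hx, hy, hxy⟩
    refine ⟨hx, hy, ?_⟩
    nlinarith [mul_nonneg hV₀ (add_nonneg hq hy)]
  obtain ⟨hmin, hval⟩ := isMinOn_cubeCost_closedForm (K := L + V * q) hα.le
    (div_pos hlam hh).le (Real.sqrt_pos.2 hS) (by positivity) hk.le (Real.sqrt_nonneg _) hβ_sq
  rw [hcost, hD]
  exact ⟨hmin.on_subset hdomain, hval⟩

theorem stmt_12 (α lam h S L q V : ℝ) (hα : 0 < α) (hlam : 0 < lam) (hh : 0 < h)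
    (hS : 0 < S) (hL : 0 < L) (hq : 0 ≤ q) (hV : V ∈ Set.Ico (0 : ℝ) 1)
    (hfeas :
      (L + V * q) / (1 + 1 / Real.sqrt S + Real.sqrt (α / lam) * (1 - V) ^ ((3 : ℝ) / 2) * Real.sqrt h)
      + Real.sqrt (α / lam * h * (1 - V)) *
        ((L + V * q) / (1 + 1 / Real.sqrt S + Real.sqrt (α / lam) * (1 - V) ^ ((3 : ℝ) / 2) * Real.sqrt h))
      ≤ L) :
    IsMinOn
      (fun p : ℝ × ℝ =>
        α * p.1 ^ 3 + lam * p.2 ^ 3 / h + α * S * ((L - p.1 - p.2) + V * (q + p.2)) ^ 3)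
      {p : ℝ × ℝ | 0 ≤ p.1 ∧ 0 ≤ p.2 ∧ p.1 + p.2 ≤ L}
      ((L + V * q) / (1 + 1 / Real.sqrt S + Real.sqrt (α / lam) * (1 - V) ^ ((3 : ℝ) / 2) * Real.sqrt h),
       Real.sqrt (α / lam * h * (1 - V)) *
        ((L + V * q) / (1 + 1 / Real.sqrt S + Real.sqrt (α / lam) * (1 - V) ^ ((3 : ℝ) / 2) * Real.sqrt h))) ∧
    (fun p : ℝ × ℝ =>
        α * p.1 ^ 3 + lam * p.2 ^ 3 / h + α * S * ((L - p.1 - p.2) + V * (q + p.2)) ^ 3)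
      ((L + V * q) / (1 + 1 / Real.sqrt S + Real.sqrt (α / lam) * (1 - V) ^ ((3 : ℝ) / 2) * Real.sqrt h),
       Real.sqrt (α / lam * h * (1 - V)) *
        ((L + V * q) / (1 + 1 / Real.sqrt S + Real.sqrt (α / lam) * (1 - V) ^ ((3 : ℝ) / 2) * Real.sqrt h)))
      = α * (L + V * q) ^ 3
          / (1 + 1 / Real.sqrt S + Real.sqrt (α / lam) * (1 - V) ^ ((3 : ℝ) / 2) * Real.sqrt h) ^ 2 :=
  stmt_12_general α lam h S L q V hα hlam hh hS hL hq hV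
end

section
/- Let α, S > 0, q ≥ 0, L > 0, and V ∈ [0, 1]. The approximated minimum expected energy J(V) = α (L + V q)³ [1 + 1/√S + √(α/λ)(1 - V)^{3/2} √h]^{-2} (with λ, h > 0) is monotonically nondecreasing in V on [0, 1]. -/
theorem stmt_14 (α lam h S L q : ℝ) (hα : 0 < α) (hlam : 0 < lam) (hh : 0 < h)
    (hS : 0 < S) (hL : 0 < L) (hq : 0 ≤ q) :
    MonotoneOn
      (fun V : ℝ => α * (L + V * q) ^ 3
        / (1 + 1 / Real.sqrt S + Real.sqrt (α / lam) * (1 - V) ^ ((3 : ℝ) / 2) * Real.sqrt h) ^ 2)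
      (Set.Icc 0 1) := by
  rintro x ⟨hx0, hx1⟩ y ⟨hy0, hy1⟩ hxy
  simp only
  set Dx := 1 + 1 / Real.sqrt S + Real.sqrt (α / lam) * (1 - x) ^ ((3 : ℝ) / 2) * Real.sqrt h with hDx
  set Dy := 1 + 1 / Real.sqrt S + Real.sqrt (α / lam) * (1 - y) ^ ((3 : ℝ) / 2) * Real.sqrt h with hDy
  have hsS : 0 < 1 / Real.sqrt S := by positivity
  have hDypos : 0 < Dy := by
    have : 0 ≤ Real.sqrt (α / lam) * (1 - y) ^ ((3 : ℝ) / 2) * Real.sqrt h := by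
      have h1y : (0:ℝ) ≤ 1 - y := by linarith
      have := Real.rpow_nonneg h1y ((3:ℝ)/2)
      positivity
    rw [hDy]; linarith
  have hDle : Dy ≤ Dx := by
    have h1y : (0:ℝ) ≤ 1 - y := by linarith
    have hle : (1 - y) ^ ((3 : ℝ) / 2) ≤ (1 - x) ^ ((3 : ℝ) / 2) :=
      Real.rpow_le_rpow h1y (by linarith) (by norm_num)
    have := mul_le_mul_of_nonneg_right
      (mul_le_mul_of_nonneg_left hle (Real.sqrt_nonneg (α / lam))) (Real.sqrt_nonneg h)
    rw [hDx, hDy]; linarith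
  have hNle : α * (L + x * q) ^ 3 ≤ α * (L + y * q) ^ 3 := by
    have : L + x * q ≤ L + y * q := by nlinarith
    have hx' : 0 ≤ L + x * q := by nlinarith
    have := pow_le_pow_left₀ hx' this 3
    nlinarith
  have hNnn : 0 ≤ α * (L + y * q) ^ 3 := by
    have : 0 ≤ L + y * q := by nlinarith
    positivity
  exact div_le_div₀ hNnn hNle (by positivity) (pow_le_pow_left₀ (le_of_lt hDypos) hDle 2)
end
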